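/- For all nonnegative integers b, c with c ≤ b and every rational number x, Δ(x;b,c) = (-1)^{bc} · Δ'(x;b,c). -/

import Mathlib

open Finset

/-- Generalized binomial coefficient `C(x,k)`. -/
def gbinom (x : ℚ) (k : ℤ) : ℚ :=
  if 0 ≤ k then (∏ m ∈ Finset.range k.toNat, (x - m)) / (k.toNat.factorial : ℚ) else 0

/-- Shifted factorial `(a)_k` with integer index. -/
def poch (a : ℚ) (k : ℤ) : ℚ :=
  if 0 ≤ k then ∏ m ∈ Finset.range k.toNat, (a + m)
  else 1 / ∏ m ∈ Finset.range (-k).toNat, (a - (m + 1))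

/-- The matrix `M(x;b,c)`. -/
def Mmat (x : ℚ) (b c : ℕ) : Matrix (Fin (b + c)) (Fin (b + c)) ℚ := fun i j =>
  if (i : ℕ) < c then
    (if (j : ℕ) < b then gbinom (x + (j : ℕ)) ((i : ℕ) : ℤ)
     else gbinom (2 * x + (j : ℕ)) ((i : ℕ) : ℤ))
  else if (i : ℕ) < b then
    (if (j : ℕ) < c then 0
     else if (j : ℕ) < b then gbinom (x + (j : ℕ)) ((i : ℕ) : ℤ)
     else gbinom (2 * x + (j : ℕ)) ((i : ℕ) : ℤ))
  else
    (if (j : ℕ) < c then 2 * gbinom (x + (j : ℕ)) (((i : ℕ) : ℤ) - (b : ℤ))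
     else if (j : ℕ) < b then gbinom (x + (j : ℕ)) (((i : ℕ) : ℤ) - (b : ℤ))
     else 0)

/-- `Δ(x;b,c)`. -/
def Δdet (x : ℚ) (b c : ℕ) : ℚ := (Mmat x b c).det

/-- The matrix `M'(x;b,c)`; column index `j` of the paper is `c + j'`. -/
def M'mat (x : ℚ) (b c : ℕ) : Matrix (Fin b) (Fin b) ℚ := fun i j =>
  if c + (j : ℕ) < b then
    gbinom (x + (c : ℕ)) (((i : ℕ) : ℤ) - ((c : ℤ) + (j : ℕ)) + (c : ℤ))
  else if (i : ℕ) < c then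
    2 * gbinom (2 * x + (b : ℕ)) (((i : ℕ) : ℤ) - ((c : ℤ) + (j : ℕ)) + (b : ℤ))
  else
    gbinom (2 * x + (b : ℕ)) (((i : ℕ) : ℤ) - ((c : ℤ) + (j : ℕ)) + (b : ℤ))

/-- `Δ'(x;b,c)`. -/
def Δ'det (x : ℚ) (b c : ℕ) : ℚ := (M'mat x b c).det

/-!
Within each column block `[0,c)`, `[c,b)`, `[b,b+c)` of `M(x;b,c)`, column `j` is `C(y + ℓ, ·)`,
up to row factors constant on the block, with `y` depending only on the block and `ℓ` the offset
of `j` in it. A unitriangular column operation replaces it by its `ℓ`-th forward difference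
`C(y, · - ℓ)`. Subtracting twice row `i - b` from row `i` for `i ≥ b` then clears the lower left
`c × c` corner and leaves the unitriangular `C(x, i - j)` in the upper left one. The lower right
`b × b` block is `M'(x;b,c)` with its rows rotated by `c` and the `c` rows coming from the bottom
negated; the rotation has sign `(-1)^((b-1)c)`.
-/

theorem gbinom_of_neg (x : ℚ) {k : ℤ} (hk : k < 0) : gbinom x k = 0 :=
  if_neg hk.not_ge

theorem gbinom_natCast (x : ℚ) (n : ℕ) : gbinom x n = Ring.choose x n := by
  rw [Ring.choose_eq_smul, gbinom, if_pos (Int.natCast_nonneg n), Int.toNat_natCast,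
    ← descPochhammer_eval_eq_prod_range, ← Polynomial.aeval_eq_smeval,
    ← descPochhammer_map (algebraMap ℤ ℚ), Polynomial.aeval_def, Polynomial.eval_map, smul_eq_mul,
    div_eq_inv_mul]

theorem gbinom_zero_right (x : ℚ) : gbinom x 0 = 1 := by
  simpa using gbinom_natCast x 0

theorem gbinom_add_one (x : ℚ) (k : ℤ) : gbinom (x + 1) k = gbinom x (k - 1) + gbinom x k := by
  rcases lt_or_ge k 0 with hk | hk
  · simp [gbinom_of_neg, hk, show k - 1 < 0 by omega]
  lift k to ℕ using hk
  cases k with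
  | zero => simp [gbinom_zero_right, gbinom_of_neg]
  | succ n =>
    rw [Nat.cast_succ, add_sub_cancel_right, ← Nat.cast_succ, gbinom_natCast, gbinom_natCast,
      gbinom_natCast, Ring.choose_succ_succ]

theorem fwdDiff_iter_gbinom (k : ℤ) (m : ℕ) :
    (fwdDiff 1)^[m] (gbinom · k) = (gbinom · (k - m)) := by
  induction m with
  | zero => simp
  | succ m ih =>
    ext y
    rw [Function.iterate_succ_apply', ih, fwdDiff, gbinom_add_one]
    push_cast
    ring_nf

theorem sum_alternating_mul_gbinom (m : ℕ) (y : ℚ) (k : ℤ) :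
    ∑ s ∈ range (m + 1), (-1 : ℚ) ^ (m - s) * m.choose s * gbinom (y + s) k =
      gbinom y (k - m) := by
  rw [← congrFun (fwdDiff_iter_gbinom k m) y, fwdDiff_iter_eq_sum_shift]
  simp [zsmul_eq_mul]

namespace Matrix

variable (R : Type*) [CommRing R]

/-- Right multiplication by `diffMat R n base` replaces column `j` by the `(j - base j)`-th forward
difference of the columns `base j, …, j`. -/
def diffMat (n : ℕ) (base : ℕ → ℕ) : Matrix (Fin n) (Fin n) R :=
  of fun t j => if base j ≤ t ∧ t ≤ j then
    (-1) ^ ((j : ℕ) - t) * ((j - base j : ℕ).choose (t - base j) : R) else 0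

def shiftMat (n b : ℕ) : Matrix (Fin n) (Fin n) R :=
  of fun i t => if (t : ℕ) + b = i then 1 else 0

variable {R}

theorem det_diffMat {n : ℕ} {base : ℕ → ℕ} (hbase : ∀ j, base j ≤ j) :
    (diffMat R n base).det = 1 := by
  rw [det_of_isUpperTriangular]
  · refine prod_eq_one fun j _ => ?_
    simp [diffMat, hbase]
  · intro t j (hjt : j < t)
    simp [diffMat, hjt.not_ge]

theorem of_mul_diffMat {n : ℕ} {base : ℕ → ℕ} (hbase : ∀ j, base j ≤ j) (f a : ℕ → ℕ → ℚ)
    (y : ℕ → ℚ) (k : ℕ → ℤ)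
    (hf : ∀ i j s, base j + s ≤ j → f i (base j + s) = a i j * gbinom (y j + s) (k i)) :
    of (fun i j : Fin n => f i j) * diffMat ℚ n base =
      of fun i j : Fin n => a i j * gbinom (y j) (k i - ((j : ℤ) - base j)) := by
  ext i j
  have hbj := hbase j
  set m := (j : ℕ) - base j with hm
  have hsupp : (range n).filter (fun t => base j ≤ t ∧ t ≤ j) = Ico (base j) (j + 1) := by
    ext t; simp only [mem_filter, mem_range, mem_Ico]; omega
  calc (of (fun i j : Fin n => f i j) * diffMat ℚ n base) i j
      = ∑ t ∈ range n, if base j ≤ t ∧ t ≤ j then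
          f i t * ((-1) ^ ((j : ℕ) - t) * ((j - base j : ℕ).choose (t - base j) : ℚ)) else 0 := by
        rw [mul_apply, ← Fin.sum_univ_eq_sum_range]
        simp [diffMat, mul_ite]
    _ = ∑ s ∈ range (m + 1), f i (base j + s) * ((-1) ^ (m - s) * (m.choose s : ℚ)) := by
        rw [← sum_filter, hsupp, sum_Ico_eq_sum_range, show (j : ℕ) + 1 - base j = m + 1 by omega]
        refine sum_congr rfl fun s _ => ?_
        rw [Nat.add_sub_cancel_left, show (j : ℕ) - (base j + s) = m - s by omega]
    _ = a i j * ∑ s ∈ range (m + 1), (-1 : ℚ) ^ (m - s) * m.choose s * gbinom (y j + s) (k i) := by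
        rw [mul_sum]
        refine sum_congr rfl fun s hs => ?_
        rw [hf i j s (by simp at hs; omega)]
        ring
    _ = _ := by
        rw [sum_alternating_mul_gbinom, of_apply, hm, Nat.cast_sub (hbase j)]

theorem det_one_sub_smul_shiftMat {n b : ℕ} (hb : 0 < b) (r : R) :
    (1 - r • shiftMat R n b).det = 1 := by
  rw [det_of_isLowerTriangular]
  · refine prod_eq_one fun i _ => ?_
    simp [shiftMat, hb.ne']
  · intro i t (hit : i < t)
    simp [shiftMat, hit.ne, show (t : ℕ) + b ≠ i by omega]

theorem shiftMat_mul_of {n b : ℕ} (f : ℕ → ℕ → R) :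
    shiftMat R n b * of (fun i j : Fin n => f i j) =
      of fun i j : Fin n => if b ≤ (i : ℕ) then f (i - b) j else 0 := by
  ext i j
  simp only [mul_apply, shiftMat, of_apply, ite_mul, one_mul, zero_mul]
  rw [Fin.sum_univ_eq_sum_range (fun t => if t + b = i then f t j else 0)]
  split_ifs
  · rw [sum_eq_single (i - b) (fun t _ ht => if_neg (by omega)) (by simp; omega), if_pos (by omega)]
  · exact sum_eq_zero fun t _ => if_neg (by omega)

theorem det_of_eq_det_lowerRight {b c : ℕ} (g : ℕ → ℕ → R)
    (hupper : ∀ i j, i < j → j < c → g i j = 0) (hdiag : ∀ i < c, g i i = 1)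
    (hlowerLeft : ∀ i j, c ≤ i → i < b + c → j < c → g i j = 0) :
    (of fun i j : Fin (b + c) => g i j).det = (of fun i j : Fin b => g (c + i) (c + j)).det := by
  let e : Fin c ⊕ Fin b ≃ Fin (b + c) := finSumFinEquiv.trans (finCongr (add_comm c b))
  rw [← det_submatrix_equiv_self e]
  set M := (of fun i j : Fin (b + c) => g i j).submatrix e e
  have h₂₁ : M.toBlocks₂₁ = 0 := by
    ext i j
    exact hlowerLeft _ _ (by simp [e]) (by simp [e]) (by simp [e])
  have h₁₁ : M.toBlocks₁₁.det = 1 := by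
    rw [det_of_isLowerTriangular]
    · exact prod_eq_one fun i _ => hdiag _ i.isLt
    · intro i j (hij : i < j)
      exact hupper _ _ (by simpa [e] using hij) (by simp [e])
  rw [← fromBlocks_toBlocks M, h₂₁, det_fromBlocks_zero₂₁, h₁₁, one_mul]
  rfl

end Matrix

open Matrix

theorem coe_finRotate_pow_apply {n : ℕ} (k : ℕ) (i : Fin n) :
    ((finRotate n ^ k) i : ℕ) = (i + k) % n := by
  induction k with
  | zero => simp [Nat.mod_eq_of_lt i.isLt]
  | succ k ih =>
    have := i.neZero
    rw [pow_succ', Equiv.Perm.mul_apply, finRotate_apply, Fin.val_add, ih, Fin.val_one',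
      Nat.mod_add_mod, Nat.add_mod_mod, add_assoc]

theorem sign_finRotate_pow_mul_neg_one_pow {b : ℕ} (hb : 0 < b) (c : ℕ) :
    ((Equiv.Perm.sign (finRotate b ^ c) : ℤ) : ℚ) * (-1) ^ c = (-1) ^ (b * c) := by
  obtain ⟨n, rfl⟩ := Nat.exists_eq_add_one_of_ne_zero hb.ne'
  simp [← pow_mul, ← pow_add, add_mul]

def blockStart (b c j : ℕ) : ℕ := if j < c then 0 else if j < b then c else b

def colVar (x : ℚ) (b j : ℕ) : ℚ := if j < b then x else 2 * x

def rowDegree (b i : ℕ) : ℤ := if i < b then i else (i : ℤ) - b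

def blockCoeff (b c i j : ℕ) : ℚ :=
  if i < c then 1
  else if i < b then (if j < c then 0 else 1)
  else if j < c then 2 else if j < b then 1 else 0

theorem Mmat_eq {x : ℚ} {b c : ℕ} (hcb : c ≤ b) :
    Mmat x b c = of fun i j : Fin (b + c) =>
      blockCoeff b c i j * gbinom (colVar x b j + j) (rowDegree b i) := by
  ext i j
  simp only [Mmat, of_apply, blockCoeff, colVar, rowDegree]
  split_ifs <;> first | omega | ring

theorem blockStart_le (b c j : ℕ) : blockStart b c j ≤ j := by
  unfold blockStart; split_ifs <;> omega

def colReducedEntry (x : ℚ) (b c i j : ℕ) : ℚ :=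
  blockCoeff b c i j *
    gbinom (colVar x b j + blockStart b c j) (rowDegree b i - ((j : ℤ) - blockStart b c j))

theorem Mmat_mul_diffMat {x : ℚ} {b c : ℕ} (hcb : c ≤ b) :
    Mmat x b c * diffMat ℚ (b + c) (blockStart b c) =
      of fun i j : Fin (b + c) => colReducedEntry x b c i j := by
  rw [Mmat_eq hcb]
  refine of_mul_diffMat (blockStart_le b c)
    (fun i t => blockCoeff b c i t * gbinom (colVar x b t + t) (rowDegree b i)) (blockCoeff b c)
    (fun j => colVar x b j + blockStart b c j) (rowDegree b) fun i j s hs => ?_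
  simp only [blockCoeff, colVar, blockStart] at hs ⊢
  split_ifs at hs ⊢ <;> first | omega | (push_cast; ring_nf)

def reducedEntry (x : ℚ) (b c i j : ℕ) : ℚ :=
  colReducedEntry x b c i j - 2 * if b ≤ i then colReducedEntry x b c (i - b) j else 0

theorem reducedEntry_of_lt {x : ℚ} {b c i j : ℕ} (hcb : c ≤ b) (hij : i < j) (hj : j < c) :
    reducedEntry x b c i j = 0 := by
  simp only [reducedEntry, colReducedEntry, blockCoeff, blockStart, colVar, rowDegree]
  simp [show i < c by omega, hj, show i < b by omega, show ¬b ≤ i by omega, gbinom_of_neg, hij]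

theorem reducedEntry_self {x : ℚ} {b c i : ℕ} (hcb : c ≤ b) (hi : i < c) :
    reducedEntry x b c i i = 1 := by
  simp only [reducedEntry, colReducedEntry, blockCoeff, blockStart, colVar, rowDegree]
  simp [hi, show i < b by omega, show ¬b ≤ i by omega, gbinom_zero_right]

theorem reducedEntry_lowerLeft {x : ℚ} {b c i j : ℕ} (hcb : c ≤ b) (hi : c ≤ i) (hib : i < b + c)
    (hj : j < c) : reducedEntry x b c i j = 0 := by
  simp only [reducedEntry, colReducedEntry, blockCoeff, blockStart, colVar, rowDegree]
  split_ifs <;> first | omega | simp [Nat.cast_sub, *]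

theorem reducedEntry_lowerRight {x : ℚ} {b c : ℕ} (hcb : c ≤ b) :
    (of fun i j : Fin b => reducedEntry x b c (c + i) (c + j)) =
      of fun i j : Fin b => (if c + (i : ℕ) < b then 1 else -1) *
        (M'mat x b c).submatrix (finRotate b ^ c) id i j := by
  ext i j
  simp only [of_apply, submatrix_apply, id, M'mat, coe_finRotate_pow_apply]
  rcases lt_or_ge (c + (i : ℕ)) b with hi | hi
  · rw [Nat.mod_eq_of_lt (by omega)]
    simp only [reducedEntry, colReducedEntry, blockCoeff, blockStart, colVar, rowDegree]
    split_ifs <;> first | omega | (push_cast; ring_nf)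
  · obtain ⟨r, hr⟩ := Nat.exists_eq_add_of_le hi
    rw [show (i : ℕ) + c = r + b by omega, Nat.add_mod_right, Nat.mod_eq_of_lt (by omega)]
    simp only [reducedEntry, colReducedEntry, blockCoeff, blockStart, colVar, rowDegree, hr,
      Nat.add_sub_cancel_left]
    split_ifs <;> first | omega | (push_cast; ring_nf)

theorem prod_ite_add_lt_eq_neg_one_pow (b c : ℕ) (hcb : c ≤ b) :
    ∏ i : Fin b, (if c + (i : ℕ) < b then (1 : ℚ) else -1) = (-1) ^ c := by
  obtain ⟨d, rfl⟩ := Nat.exists_eq_add_of_le' hcb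
  rw [Fin.prod_univ_eq_prod_range (fun i => if c + i < d + c then (1 : ℚ) else -1), prod_range_add,
    prod_eq_one fun i hi => if_pos (by rw [mem_range] at hi; omega),
    prod_congr rfl fun i _ => if_neg (by omega), prod_const, card_range, one_mul]

/-- Equation (2.4): `Δ(x;b,c) = (-1)^{bc} Δ'(x;b,c)`. -/
theorem delta_eq_delta' (b c : ℕ) (hcb : c ≤ b) (x : ℚ) :
    Δdet x b c = (-1 : ℚ) ^ (b * c) * Δ'det x b c := by
  obtain rfl | hb := Nat.eq_zero_or_pos b
  · obtain rfl := Nat.le_zero.1 hcb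
    simp [Δdet, Δ'det]
  calc Δdet x b c
      = ((1 - (2 : ℚ) • shiftMat ℚ (b + c) b) *
          (Mmat x b c * diffMat ℚ (b + c) (blockStart b c))).det := by
        rw [det_mul, det_mul, det_one_sub_smul_shiftMat hb, det_diffMat (blockStart_le b c),
          one_mul, mul_one, Δdet]
    _ = (of fun i j : Fin (b + c) => reducedEntry x b c i j).det := by
        rw [Mmat_mul_diffMat hcb, sub_mul, one_mul, smul_mul_assoc, shiftMat_mul_of]
        rfl
    _ = (of fun i j : Fin b => reducedEntry x b c (c + i) (c + j)).det :=
        det_of_eq_det_lowerRight _ (fun _ _ => reducedEntry_of_lt hcb)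
          (fun _ => reducedEntry_self hcb) (fun _ _ => reducedEntry_lowerLeft hcb)
    _ = (-1 : ℚ) ^ (b * c) * Δ'det x b c := by
        rw [reducedEntry_lowerRight hcb, det_mul_column, det_permute,
          prod_ite_add_lt_eq_neg_one_pow b c hcb, ← mul_assoc, mul_comm ((-1 : ℚ) ^ c),
          sign_finRotate_pow_mul_neg_one_pow hb, Δ'det]
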